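/- arXiv:2410.12141 — 2 statements merged into one kernel-verified Lean document; each statement's English description precedes it below -/
import Mathlib

section
/- Let R be a unital *-algebra with a salient *-positive cone R₊ in which 1 is an order unit, and assume that every hermitian element of R is a difference of two elements of R₊. Define ‖a‖ := inf{R > 0 : R·1 − a*a ∈ R₊ and R·1 − a a* ∈ R₊}^{1/2}. Then ‖ab‖ ≤ ‖a‖‖b‖ for all a, b ∈ R. -/
/-- submultiplicativity of the Minkowski-type seminorm
‖a‖ = (inf {R > 0 : R·1 − a*a ∈ R₊ and R·1 − a a* ∈ R₊})^(1/2) on a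
semi-pre-C*-algebra with salient cone and order unit 1. -/
theorem minkowski_seminorm_submultiplicative
    (R : Type*) [Ring R] [StarRing R] [Algebra ℂ R]
    (P : Set R)
    (hherm : ∀ a ∈ P, star a = a)
    (hone : ∀ r : ℝ, 0 ≤ r → ((r : ℂ) • (1 : R)) ∈ P)
    (hadd : ∀ a ∈ P, ∀ b ∈ P, a + b ∈ P)
    (hsmul : ∀ r : ℝ, 0 ≤ r → ∀ a ∈ P, ((r : ℂ) • a) ∈ P)
    (hconj : ∀ a ∈ P, ∀ x : R, star x * a * x ∈ P)
    (hsalient : ∀ a ∈ P, -a ∈ P → a = 0)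
    (horderUnit : ∀ a : R, star a = a → ∃ C : ℝ, 0 < C ∧ (C : ℂ) • (1 : R) - a ∈ P)
    (hdecomp : ∀ a : R, star a = a → ∃ p ∈ P, ∃ q ∈ P, a = p - q)
    (hbdd : ∀ x : R, ∃ C : ℝ, 0 < C ∧ (C : ℂ) • (1 : R) - star x * x ∈ P)
    (n : R → ℝ)
    (hn : ∀ a : R, n a = sInf {C : ℝ | 0 < C ∧ (C : ℂ) • (1 : R) - star a * a ∈ P ∧
      (C : ℂ) • (1 : R) - a * star a ∈ P}) :
    ∀ a b : R, Real.sqrt (n (a * b)) ≤ Real.sqrt (n a) * Real.sqrt (n b) := by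
  intro a b
  set S : R → Set ℝ := fun x => {C : ℝ | 0 < C ∧ (C : ℂ) • (1 : R) - star x * x ∈ P ∧
      (C : ℂ) • (1 : R) - x * star x ∈ P} with hS
  have hne : ∀ x : R, (S x).Nonempty := by
    intro x
    obtain ⟨C1, hC1, h1⟩ := hbdd x
    obtain ⟨C2, hC2, h2⟩ := hbdd (star x)
    rw [star_star] at h2
    refine ⟨C1 + C2, by positivity, ?_, ?_⟩
    · have h := hadd _ h1 _ (hone C2 hC2.le)
      have e : ((C1 : ℂ) • (1 : R) - star x * x) + (C2 : ℂ) • (1 : R)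
          = ((C1 + C2 : ℝ) : ℂ) • (1 : R) - star x * x := by
        push_cast; module
      rwa [e] at h
    · have h := hadd _ h2 _ (hone C1 hC1.le)
      have e : ((C2 : ℂ) • (1 : R) - x * star x) + (C1 : ℂ) • (1 : R)
          = ((C1 + C2 : ℝ) : ℂ) • (1 : R) - x * star x := by
        push_cast; module
      rwa [e] at h
  have hbdS : ∀ x : R, BddBelow (S x) := fun x => ⟨0, fun C hC => hC.1.le⟩
  have hn0 : ∀ x : R, 0 ≤ n x := by
    intro x
    rw [hn x]
    exact le_csInf (hne x) (fun C hC => hC.1.le)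
  have key : ∀ C ∈ S a, ∀ D ∈ S b, C * D ∈ S (a * b) := by
    rintro C ⟨hCpos, hC1, hC2⟩ D ⟨hDpos, hD1, hD2⟩
    refine ⟨by positivity, ?_, ?_⟩
    · have t1 := hconj _ hC1 b
      have t2 := hsmul C hCpos.le _ hD1
      have h := hadd _ t1 _ t2
      have e : star b * ((C : ℂ) • (1 : R) - star a * a) * b
          + (C : ℂ) • ((D : ℂ) • (1 : R) - star b * b)
          = ((C * D : ℝ) : ℂ) • (1 : R) - star (a * b) * (a * b) := by
        push_cast
        simp only [star_mul, mul_sub, sub_mul, smul_mul_assoc, mul_smul_comm, smul_smul,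
          smul_sub, mul_one, one_mul, mul_assoc]
        module
      rwa [e] at h
    · have t1 := hconj _ hD2 (star a)
      rw [star_star] at t1
      have t2 := hsmul D hDpos.le _ hC2
      have h := hadd _ t1 _ t2
      have e : a * ((D : ℂ) • (1 : R) - b * star b) * star a
          + (D : ℂ) • ((C : ℂ) • (1 : R) - a * star a)
          = ((C * D : ℝ) : ℂ) • (1 : R) - (a * b) * star (a * b) := by
        push_cast
        simp only [star_mul, mul_sub, sub_mul, smul_mul_assoc, mul_smul_comm, smul_smul,
          smul_sub, mul_one, one_mul, mul_assoc]
        module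
      rwa [e] at h
  have h1 : ∀ C ∈ S a, n (a * b) ≤ C * n b := by
    intro C hC
    have hdiv : n (a * b) / C ≤ n b := by
      rw [hn b]
      refine le_csInf (hne b) (fun D hD => ?_)
      rw [div_le_iff₀ hC.1]
      calc n (a * b) ≤ C * D := by
            rw [hn (a * b)]; exact csInf_le (hbdS _) (key C hC D hD)
        _ = D * C := mul_comm _ _
    calc n (a * b) = (n (a * b) / C) * C := (div_mul_cancel₀ _ hC.1.ne').symm
      _ ≤ n b * C := mul_le_mul_of_nonneg_right hdiv hC.1.le
      _ = C * n b := mul_comm _ _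
  have hmain : n (a * b) ≤ n a * n b := by
    rcases eq_or_lt_of_le (hn0 b) with hb0 | hb0
    · obtain ⟨C, hC⟩ := hne a
      have := h1 C hC
      rw [← hb0] at this ⊢
      simpa using this.trans (by simp)
    · have hdiv : n (a * b) / n b ≤ n a := by
        rw [hn a]
        refine le_csInf (hne a) (fun C hC => ?_)
        rw [div_le_iff₀ hb0]
        exact h1 C hC
      calc n (a * b) = (n (a * b) / n b) * n b := (div_mul_cancel₀ _ hb0.ne').symm
        _ ≤ n a * n b := mul_le_mul_of_nonneg_right hdiv hb0.le
  calc Real.sqrt (n (a * b)) ≤ Real.sqrt (n a * n b) := Real.sqrt_le_sqrt hmain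
    _ = Real.sqrt (n a) * Real.sqrt (n b) := Real.sqrt_mul (hn0 a) _
end

section
/- Let Γ be a group generated by a finite symmetric set S, with symmetric probability weights μ(g) > 0 for g ∈ S, and Δ = 1 − Σ_{g∈S} μ(g) g ∈ ℂ[Γ]. Suppose there exists k > 0 such that for every unitary representation π of Γ on a complex Hilbert space, spec(π(Δ)) ⊆ {0} ∪ [k, ∞). Then every unitary representation of Γ that has almost invariant vectors (for every ε > 0 a unit vector ξ with ‖π(g)ξ − ξ‖ < ε for all g ∈ S) has a nonzero invariant vector (π(g)ξ = ξ for all g ∈ Γ). -/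
/-!
The operator `Δ = π(Δ)` is self-adjoint and `re ⟪Δ ξ, ξ⟫ = ∑ μ(g) ‖π(g) ξ - ξ‖² / 2`, so
its kernel consists of the `S`-invariant, hence `Γ`-invariant, vectors. Because of the gap `(0, k)`
in its spectrum, the spectral projection `P` onto `ker Δ` is a continuous function of `Δ`, and
`1 - P = C Δ` with `‖C‖ ≤ 1 / k`. An almost invariant unit vector `ξ` has `‖Δ ξ‖ ≤ k / 2`, hence
`‖ξ - P ξ‖ ≤ 1 / 2`, and `P ξ` is a nonzero invariant vector.
-/

open scoped InnerProductSpace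

theorem IsSelfAdjoint.exists_mul_eq_zero_and_one_sub_eq_mul_of_spectrum_subset
    {A : Type*} [CStarAlgebra A] {a : A} (ha : IsSelfAdjoint a) {k : ℝ} (hk : 0 < k)
    (hspec : spectrum ℝ a ⊆ {0} ∪ Set.Ici k) :
    ∃ p c : A, a * p = 0 ∧ 1 - p = c * a ∧ ‖c‖ ≤ k⁻¹ := by
  -- On the spectrum, `f` is the indicator of `{0}` and `h t * t = 1 - f t`.
  set f : ℝ → ℝ := fun t ↦ max (1 - t / k) 0
  set h : ℝ → ℝ := fun t ↦ (max t k)⁻¹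
  have hf_of_le {t : ℝ} (ht : k ≤ t) : f t = 0 :=
    max_eq_right (by linarith [(one_le_div hk).mpr ht])
  have hh : ContinuousOn h (spectrum ℝ a) :=
    (continuous_id.max continuous_const).continuousOn.inv₀
      fun t _ ↦ (hk.trans_le (le_max_right t k)).ne'
  refine ⟨cfc f a, cfc h a, ?_, ?_, ?_⟩
  · calc a * cfc f a = cfc (fun t ↦ t * f t) a := by rw [cfc_mul _ _ a, cfc_id' ℝ a]
      _ = cfc (0 : ℝ → ℝ) a := cfc_congr fun t ht ↦ by
          rcases hspec ht with rfl | (ht : k ≤ t)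
          · simp
          · simp [hf_of_le ht]
      _ = 0 := cfc_zero ℝ a
  · calc 1 - cfc f a = cfc (fun t ↦ 1 - f t) a := by rw [cfc_sub _ _ a, cfc_const_one ℝ a]
      _ = cfc (fun t ↦ h t * t) a := cfc_congr fun t ht ↦ by
          rcases hspec ht with rfl | (ht : k ≤ t)
          · simp [f]
          · simp [hf_of_le ht, h, max_eq_left ht, (hk.trans_le ht).ne']
      _ = cfc h a * a := by rw [cfc_mul _ _ a, cfc_id' ℝ a]
  · refine norm_cfc_le (by positivity) fun t _ ↦ ?_
    rw [Real.norm_eq_abs, abs_of_pos (inv_pos.mpr (hk.trans_le (le_max_right t k)))]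
    exact inv_anti₀ hk (le_max_right t k)

theorem spectrum_real_subset_of_spectrum_complex_subset {A : Type*} [Ring A] [Algebra ℂ A]
    {a : A} {k : ℝ} (h : spectrum ℂ a ⊆ {0} ∪ (↑) '' Set.Ici k) :
    spectrum ℝ a ⊆ {0} ∪ Set.Ici k := by
  intro x hx
  have hx' : (x : ℂ) ∈ spectrum ℂ a := spectrum.algebraMap_mem ℂ hx
  rcases h hx' with hx | ⟨y, hy, hyx⟩
  · exact Or.inl (Complex.ofReal_eq_zero.mp hx)
  · exact Or.inr (Complex.ofReal_injective hyx ▸ hy)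

theorem re_inner_sub_self_eq_of_norm_eq {E : Type*} [NormedAddCommGroup E] [InnerProductSpace ℂ E]
    {x y : E} (h : ‖y‖ = ‖x‖) : (⟪x - y, x⟫_ℂ).re = ‖y - x‖ ^ 2 / 2 := by
  have hyx := norm_sub_sq (𝕜 := ℂ) y x
  have hxx := inner_self_eq_norm_sq (𝕜 := ℂ) x
  simp only [RCLike.re_to_complex] at hyx hxx
  rw [inner_sub_left, Complex.sub_re, hxx, hyx, h]
  ring

namespace MonoidHom

variable {Γ H : Type*} [Group Γ] [NormedAddCommGroup H] [InnerProductSpace ℂ H]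
  [CompleteSpace H]

noncomputable def laplacian (π : Γ →* unitary (H →L[ℂ] H)) (S : Finset Γ) (μ : Γ → ℝ) :
    H →L[ℂ] H :=
  1 - ∑ g ∈ S, (μ g : ℂ) • (π g : H →L[ℂ] H)

variable (π : Γ →* unitary (H →L[ℂ] H)) {S : Finset Γ} {μ : Γ → ℝ}

theorem laplacian_apply_eq_sum (hμ : ∑ g ∈ S, μ g = 1) (ξ : H) :
    π.laplacian S μ ξ = ∑ g ∈ S, (μ g : ℂ) • (ξ - (π g : H →L[ℂ] H) ξ) := by
  simp [laplacian, smul_sub, Finset.sum_sub_distrib, ← Finset.sum_smul, hμ]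

theorem norm_laplacian_apply_le (hμpos : ∀ g ∈ S, 0 ≤ μ g) (hμ : ∑ g ∈ S, μ g = 1) {ξ : H}
    {ε : ℝ} (hξ : ∀ g ∈ S, ‖(π g : H →L[ℂ] H) ξ - ξ‖ ≤ ε) : ‖π.laplacian S μ ξ‖ ≤ ε :=
  calc ‖π.laplacian S μ ξ‖ ≤ ∑ g ∈ S, ‖(μ g : ℂ) • (ξ - (π g : H →L[ℂ] H) ξ)‖ := by
        rw [laplacian_apply_eq_sum π hμ]
        exact norm_sum_le _ _
    _ ≤ ∑ g ∈ S, μ g * ε := Finset.sum_le_sum fun g hg ↦ by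
        rw [norm_smul, Complex.norm_real, Real.norm_of_nonneg (hμpos g hg), norm_sub_rev]
        exact mul_le_mul_of_nonneg_left (hξ g hg) (hμpos g hg)
    _ = ε := by rw [← Finset.sum_mul, hμ, one_mul]

theorem re_inner_laplacian_apply_self (hμ : ∑ g ∈ S, μ g = 1) (ξ : H) :
    (⟪π.laplacian S μ ξ, ξ⟫_ℂ).re = ∑ g ∈ S, μ g * (‖(π g : H →L[ℂ] H) ξ - ξ‖ ^ 2 / 2) := by
  simp only [laplacian_apply_eq_sum π hμ, sum_inner, inner_smul_left, Complex.conj_ofReal,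
    Complex.re_sum, Complex.re_ofReal_mul,
    re_inner_sub_self_eq_of_norm_eq (Unitary.norm_map (π _) ξ)]

theorem apply_eq_self_of_laplacian_apply_eq_zero (hμpos : ∀ g ∈ S, 0 < μ g)
    (hμ : ∑ g ∈ S, μ g = 1) {η : H} (hη : π.laplacian S μ η = 0) :
    ∀ g ∈ S, (π g : H →L[ℂ] H) η = η := by
  have hsum : ∑ g ∈ S, μ g * (‖(π g : H →L[ℂ] H) η - η‖ ^ 2 / 2) = 0 := by
    rw [← π.re_inner_laplacian_apply_self hμ η, hη, inner_zero_left, Complex.zero_re]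
  intro g hg
  have hterm := (Finset.sum_eq_zero_iff_of_nonneg fun g hg ↦
    mul_nonneg (hμpos g hg).le (by positivity)).mp hsum g hg
  simpa [(hμpos g hg).ne', sub_eq_zero] using hterm

theorem apply_eq_self_of_closure_eq_top (hS : Subgroup.closure (S : Set Γ) = ⊤) {η : H}
    (hη : ∀ g ∈ S, (π g : H →L[ℂ] H) η = η) (g : Γ) : (π g : H →L[ℂ] H) η = η := by
  have hg : g ∈ Subgroup.closure (S : Set Γ) := hS ▸ Subgroup.mem_top g
  induction hg using Subgroup.closure_induction with
  | mem x hx => exact hη x hx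
  | one => simp
  | mul x y _ _ hx hy => simp [hx, hy]
  | inv x _ hx =>
    conv_lhs => rw [← hx]
    rw [map_inv, ← Unitary.star_eq_inv, ← mul_apply_eq_comp, Unitary.coe_star,
      Unitary.coe_star_mul_self, one_apply_eq_self]

theorem isSelfAdjoint_laplacian (hS : ∀ g, g ∈ S ↔ g⁻¹ ∈ S)
    (hμ : ∀ g ∈ S, μ g⁻¹ = μ g) : IsSelfAdjoint (π.laplacian S μ) := by
  have hstar (g : Γ) :
      star ((μ g : ℂ) • (π g : H →L[ℂ] H)) = (μ g : ℂ) • (π g⁻¹ : H →L[ℂ] H) := by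
    rw [star_smul, Complex.star_def, Complex.conj_ofReal, map_inv, ← Unitary.star_eq_inv,
      Unitary.coe_star]
  rw [IsSelfAdjoint, laplacian, star_sub, star_one, star_sum]
  simp_rw [hstar]
  congr 1
  exact Finset.sum_nbij' (·⁻¹) (·⁻¹) (fun g hg ↦ (hS g).mp hg) (fun g hg ↦ (hS g).mp hg)
    (fun g _ ↦ inv_inv g) (fun g _ ↦ inv_inv g) fun g hg ↦ by simp [hμ g hg]

end MonoidHom

/-- if the Laplacian Δ = 1 − Σ_{g∈S} μ(g) g of a finitely
generated group Γ has a uniform spectral gap spec(π(Δ)) ⊆ {0} ∪ [k, ∞) in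
every unitary representation, then every unitary representation of Γ with
almost invariant vectors has a nonzero invariant vector. -/
theorem invariant_vector_of_spectral_gap
    (Γ : Type*) [Group Γ]
    (S : Finset Γ)
    (hSsym : ∀ g, g ∈ S ↔ g⁻¹ ∈ S)
    (hSgen : Subgroup.closure (S : Set Γ) = ⊤)
    (μ : Γ → ℝ) (hμpos : ∀ g ∈ S, 0 < μ g)
    (hμsym : ∀ g ∈ S, μ g⁻¹ = μ g)
    (hμprob : ∑ g ∈ S, μ g = 1)
    (k : ℝ) (hk : 0 < k)
    (hgap : ∀ (H : Type) (_ : NormedAddCommGroup H) (_ : InnerProductSpace ℂ H)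
      (_ : CompleteSpace H) (π : Γ →* unitary (H →L[ℂ] H)),
      spectrum ℂ ((1 : H →L[ℂ] H) - ∑ g ∈ S, (μ g : ℂ) • ((π g : H →L[ℂ] H)))
        ⊆ {0} ∪ ((↑) '' Set.Ici k)) :
    ∀ (H : Type) (_ : NormedAddCommGroup H) (_ : InnerProductSpace ℂ H)
      (_ : CompleteSpace H) (π : Γ →* unitary (H →L[ℂ] H)),
      (∀ ε : ℝ, 0 < ε → ∃ ξ : H, ‖ξ‖ = 1 ∧ ∀ g ∈ S, ‖(π g : H →L[ℂ] H) ξ - ξ‖ < ε) →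
      ∃ ξ : H, ξ ≠ 0 ∧ ∀ g : Γ, (π g : H →L[ℂ] H) ξ = ξ := by
  intro H _ _ _ π hai
  obtain ⟨P, C, hΔP, hPC, hC⟩ :=
    IsSelfAdjoint.exists_mul_eq_zero_and_one_sub_eq_mul_of_spectrum_subset
      (π.isSelfAdjoint_laplacian hSsym hμsym) hk
      (spectrum_real_subset_of_spectrum_complex_subset (hgap H _ _ _ π))
  obtain ⟨ξ, hξ, hξS⟩ := hai (k / 2) (by positivity)
  have hΔξ : ‖π.laplacian S μ ξ‖ ≤ k / 2 :=
    π.norm_laplacian_apply_le (fun g hg ↦ (hμpos g hg).le) hμprob fun g hg ↦ (hξS g hg).le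
  have hPξ : ‖ξ - P ξ‖ ≤ 1 / 2 :=
    calc ‖ξ - P ξ‖ = ‖C (π.laplacian S μ ξ)‖ := by
          rw [← mul_apply_eq_comp, ← hPC, sub_apply, one_apply_eq_self]
      _ ≤ k⁻¹ * (k / 2) := C.le_of_opNorm_le_of_le hC hΔξ
      _ = 1 / 2 := by field_simp
  refine ⟨P ξ, fun hPξ0 ↦ ?_, π.apply_eq_self_of_closure_eq_top hSgen
    (π.apply_eq_self_of_laplacian_apply_eq_zero hμpos hμprob ?_)⟩
  · rw [hPξ0, sub_zero, hξ] at hPξ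
    norm_num at hPξ
  · rw [← mul_apply_eq_comp, hΔP, zero_apply]
end
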